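/- Let |ν| ≠ 1, t ≠ 0, and N ∈ ℕ with N > 1 + |ν|. Define A_N = {ξ₁ : |(1+|ν|)ξ₁ + sgn(ν)N| < (1+|ν|)(4⟨t⟩N)^{-1}} and B_N = {ξ₂ : |2ξ₂ - sgn(ν)N| < (4⟨t⟩N)^{-1}}. Then for all ξ₁ ∈ A_N and ξ₂ ∈ B_N: (a) sgn(ξ₁) = -sgn(ν); (b) c₁N ≤ ⟨ξ₁⟩, ⟨ξ₂⟩, ⟨ξ₁+ξ₂⟩ ≤ c₂N for absolute constants 0 < c₁ ≤ c₂ depending only on ν; (c) |(ξ₁+ξ₂)² - ν|ξ₁|ξ₁ - ξ₂²| < 1/|t|. -/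

import Mathlib

/-! On `A_N × B_N` one has `(1+|ν|)ξ₁ ≈ -sgn(ν) N` and `2ξ₂ ≈ sgn(ν) N`, so `ξ₁` has the sign
of `-ν` and `ν|ξ₁|ξ₁ = -|ν|ξ₁²`. The phase then factors as
`(ξ₁+ξ₂)² - ν|ξ₁|ξ₁ - ξ₂² = ξ₁ ((1+|ν|)ξ₁ + 2ξ₂)`, a product of a factor of size `N` and a factor
of size `1/(⟨t⟩N)`. The sizes of `ξ₁`, `ξ₂` are read off directly, and
`2(1+|ν|)(ξ₁+ξ₂) ≈ sgn(ν)(|ν|-1)N`, which is of size `N` because `|ν| ≠ 1`;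
since `⟨t⟩N ≥ 1`, these first claims only need the coarser windows of widths `(1+|ν|)/4` and `1/4`. -/

/-- The Japanese bracket `⟨t⟩ = √(1 + t²)`. -/
noncomputable def jb (t : ℝ) : ℝ := Real.sqrt (1 + t ^ 2)

/-- `sgn x = x/|x|` for `x ≠ 0`, and `sgn 0 = 1`. -/
noncomputable def sgn (x : ℝ) : ℝ := if x = 0 then 1 else x / |x|

lemma one_le_jb (t : ℝ) : 1 ≤ jb t :=
  Real.one_le_sqrt.mpr (by nlinarith [sq_nonneg t])

lemma abs_le_jb (t : ℝ) : |t| ≤ jb t :=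
  Real.abs_le_sqrt (by linarith)

lemma abs_lt_jb (t : ℝ) : |t| < jb t :=
  (Real.lt_sqrt (abs_nonneg t)).mpr (by rw [sq_abs]; linarith)

lemma jb_le_one_add_abs (t : ℝ) : jb t ≤ 1 + |t| :=
  Real.sqrt_le_iff.mpr ⟨by positivity, by nlinarith [abs_nonneg t, sq_abs t]⟩

lemma jb_bounds_of_abs_bounds {x c C N : ℝ} (hN : 1 ≤ N) (hlo : 2 * c * N ≤ 1 + |x|)
    (hhi : |x| ≤ C * N) : c * N ≤ jb x ∧ jb x ≤ (C + 1) * N := by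
  have h₁ := one_le_jb x
  have h₂ := abs_le_jb x
  have h₃ := jb_le_one_add_abs x
  constructor <;> linarith

lemma div_four_mul_jb_mul_le {c N : ℝ} (t : ℝ) (hc : 0 ≤ c) (hN : 1 ≤ N) :
    c / (4 * jb t * N) ≤ c / 4 :=
  div_le_div_of_nonneg_left hc (by norm_num) (by nlinarith [one_le_jb t])

lemma sgn_of_pos {x : ℝ} (h : 0 < x) : sgn x = 1 := by
  rw [sgn, if_neg h.ne', abs_of_pos h, div_self h.ne']

lemma sgn_of_neg {x : ℝ} (h : x < 0) : sgn x = -1 := by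
  rw [sgn, if_neg h.ne, abs_of_neg h, div_neg, div_self h.ne]

lemma sgn_of_nonneg {x : ℝ} (h : 0 ≤ x) : sgn x = 1 := by
  rcases h.eq_or_lt with rfl | h
  · simp [sgn]
  · exact sgn_of_pos h

lemma sgn_mul_self (x : ℝ) : sgn x * x = |x| := by
  rcases lt_trichotomy x 0 with h | rfl | h
  · rw [sgn_of_neg h, abs_of_neg h, neg_one_mul]
  · simp
  · rw [sgn_of_pos h, abs_of_pos h, one_mul]

lemma abs_sgn (x : ℝ) : |sgn x| = 1 := by
  rcases le_or_gt 0 x with h | h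
  · simp [sgn_of_nonneg h]
  · simp [sgn_of_neg h]

lemma sgn_eq_neg_sgn_of_abs_lt {a x y M : ℝ} (ha : 0 < a) (h : |a * x + sgn y * M| < M) :
    sgn x = -sgn y := by
  rcases le_or_gt 0 y with hy | hy
  · rw [sgn_of_nonneg hy] at h ⊢
    have hax : a * x < 0 := by linarith [(abs_lt.mp h).2]
    rw [sgn_of_neg (neg_of_mul_neg_right hax ha.le)]
  · rw [sgn_of_neg hy] at h ⊢
    have hax : 0 < a * x := by linarith [(abs_lt.mp h).1]
    rw [sgn_of_pos (pos_of_mul_pos_right hax ha.le), neg_neg]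

lemma abs_abs_sub_lt {x s M ε : ℝ} (hs : |s| = 1) (hM : 0 ≤ M) (h : |x - s * M| < ε) :
    |(|x| - M)| < ε := by
  have hsM : |s * M| = M := by rw [abs_mul, hs, one_mul, abs_of_nonneg hM]
  calc |(|x| - M)| = |(|x| - |s * M|)| := by rw [hsM]
    _ ≤ |x - s * M| := abs_abs_sub_abs_le_abs_sub _ _
    _ < ε := h

lemma phase_eq_of_sgn_eq_neg {ν ξ₁ ξ₂ : ℝ} (h : sgn ξ₁ = -sgn ν) :
    (ξ₁ + ξ₂) ^ 2 - ν * |ξ₁| * ξ₁ - ξ₂ ^ 2 = ξ₁ * ((1 + |ν|) * ξ₁ + 2 * ξ₂) := by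
  rw [← sgn_mul_self ξ₁, h, ← sgn_mul_self ν]
  ring

/-- The factor `||ν| - 1|` is only needed for the lower bound on `⟨ξ₁ + ξ₂⟩`. -/
noncomputable def lowerConst (ν : ℝ) : ℝ := min 1 |(|ν| - 1)| / (8 * (1 + |ν|))

lemma eight_mul_mul_lowerConst (ν : ℝ) : 8 * (1 + |ν|) * lowerConst ν = min 1 |(|ν| - 1)| := by
  rw [lowerConst, mul_div_cancel₀ _ (by positivity)]

lemma lowerConst_pos {ν : ℝ} (hν : |ν| ≠ 1) : 0 < lowerConst ν :=
  div_pos (lt_min one_pos (abs_pos.mpr (sub_ne_zero.mpr hν))) (by positivity)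

lemma lowerConst_le_one_eighth (ν : ℝ) : lowerConst ν ≤ 1 / 8 := by
  have h := eight_mul_mul_lowerConst ν
  have hmin := min_le_left 1 |(|ν| - 1)|
  have hpos : 0 ≤ lowerConst ν := div_nonneg (le_min zero_le_one (abs_nonneg _)) (by positivity)
  nlinarith [abs_nonneg ν]

section Localization

variable {ν N ξ₁ ξ₂ : ℝ}

lemma abs_mul_abs_sub_lt (hN : 0 ≤ N)
    (h₁ : |(1 + |ν|) * ξ₁ + sgn ν * N| < (1 + |ν|) / 4) :
    |(1 + |ν|) * |ξ₁| - N| < (1 + |ν|) / 4 := by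
  have hs : |-sgn ν| = 1 := by rw [abs_neg, abs_sgn]
  have h := abs_abs_sub_lt hs hN (by rwa [neg_mul, sub_neg_eq_add])
  rwa [abs_mul, abs_of_pos (by positivity : (0 : ℝ) < 1 + |ν|)] at h

lemma abs_two_mul_abs_sub_lt (hN : 0 ≤ N) (h₂ : |2 * ξ₂ - sgn ν * N| < 1 / 4) :
    |2 * |ξ₂| - N| < 1 / 4 := by
  have h := abs_abs_sub_lt (abs_sgn ν) hN h₂
  rwa [abs_mul, abs_two] at h

lemma abs_add_lower_bound (hN : 0 ≤ N)
    (h₁ : |(1 + |ν|) * ξ₁ + sgn ν * N| < (1 + |ν|) / 4)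
    (h₂ : |2 * ξ₂ - sgn ν * N| < 1 / 4) :
    N * |(|ν| - 1)| - 3 * (1 + |ν|) / 4 < 2 * (1 + |ν|) * |ξ₁ + ξ₂| := by
  have ha : 0 < 1 + |ν| := by positivity
  have hlhs : |sgn ν * N * (|ν| - 1)| = N * |(|ν| - 1)| := by
    rw [abs_mul, abs_mul, abs_sgn, one_mul, abs_of_nonneg hN]
  have hsplit : sgn ν * N * (|ν| - 1) = 2 * (1 + |ν|) * (ξ₁ + ξ₂)
      + (-2) * ((1 + |ν|) * ξ₁ + sgn ν * N) + (-(1 + |ν|)) * (2 * ξ₂ - sgn ν * N) := by ring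
  have hη₂ := mul_lt_mul_of_pos_left h₂ ha
  suffices N * |(|ν| - 1)| < 2 * (1 + |ν|) * |ξ₁ + ξ₂| + 3 * (1 + |ν|) / 4 by linarith
  calc N * |(|ν| - 1)| = |sgn ν * N * (|ν| - 1)| := hlhs.symm
    _ ≤ 2 * (1 + |ν|) * |ξ₁ + ξ₂| + 2 * |(1 + |ν|) * ξ₁ + sgn ν * N|
        + (1 + |ν|) * |2 * ξ₂ - sgn ν * N| := by
      rw [hsplit]
      refine (abs_add_three _ _ _).trans_eq ?_
      simp only [abs_mul, abs_neg, abs_two, abs_of_pos ha]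
    _ < 2 * (1 + |ν|) * |ξ₁ + ξ₂| + 3 * (1 + |ν|) / 4 := by linarith

lemma sgn_fst_eq_neg_sgn (hN : 1 + |ν| < N)
    (h₁ : |(1 + |ν|) * ξ₁ + sgn ν * N| < (1 + |ν|) / 4) : sgn ξ₁ = -sgn ν :=
  sgn_eq_neg_sgn_of_abs_lt (by positivity) (h₁.trans (by linarith [abs_nonneg ν]))

lemma jb_fst_bounds (hN : 1 + |ν| < N)
    (h₁ : |(1 + |ν|) * ξ₁ + sgn ν * N| < (1 + |ν|) / 4) :
    lowerConst ν * N ≤ jb ξ₁ ∧ jb ξ₁ ≤ 4 * N := by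
  have hν := abs_nonneg ν
  have hξ := abs_lt.mp (abs_mul_abs_sub_lt (by linarith) h₁)
  have hc := eight_mul_mul_lowerConst ν ▸ min_le_left 1 |(|ν| - 1)|
  have hlo : (1 + |ν|) * (2 * lowerConst ν * N) ≤ (1 + |ν|) * |ξ₁| := by
    nlinarith [mul_le_mul_of_nonneg_right hc (by linarith : (0 : ℝ) ≤ N)]
  have hhi : |ξ₁| ≤ (1 + |ν|) * |ξ₁| := le_mul_of_one_le_left (abs_nonneg _) (by linarith)
  have h := jb_bounds_of_abs_bounds (C := 3) (by linarith)
    ((le_of_mul_le_mul_left hlo (by positivity)).trans (by linarith)) (by linarith)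
  norm_num at h
  exact h

lemma jb_snd_bounds (hN : 1 + |ν| < N) (h₂ : |2 * ξ₂ - sgn ν * N| < 1 / 4) :
    lowerConst ν * N ≤ jb ξ₂ ∧ jb ξ₂ ≤ 4 * N := by
  have hξ := abs_lt.mp (abs_two_mul_abs_sub_lt (by linarith [abs_nonneg ν]) h₂)
  have hc := lowerConst_le_one_eighth ν
  have h := jb_bounds_of_abs_bounds (C := 3) (x := ξ₂) (c := lowerConst ν) (N := N)
    (by linarith [abs_nonneg ν]) (by nlinarith [abs_nonneg ν]) (by linarith [abs_nonneg ν])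
  norm_num at h
  exact h

lemma jb_add_bounds (hN : 1 + |ν| < N)
    (h₁ : |(1 + |ν|) * ξ₁ + sgn ν * N| < (1 + |ν|) / 4)
    (h₂ : |2 * ξ₂ - sgn ν * N| < 1 / 4) :
    lowerConst ν * N ≤ jb (ξ₁ + ξ₂) ∧ jb (ξ₁ + ξ₂) ≤ 4 * N := by
  have hν := abs_nonneg ν
  have hN0 : 0 ≤ N := by linarith
  have hsum := abs_add_lower_bound hN0 h₁ h₂
  have hξ₁ := abs_lt.mp (abs_mul_abs_sub_lt hN0 h₁)
  have hξ₂ := abs_lt.mp (abs_two_mul_abs_sub_lt hN0 h₂)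
  have hc := eight_mul_mul_lowerConst ν ▸ min_le_right 1 |(|ν| - 1)|
  have hlo : (1 + |ν|) * (2 * lowerConst ν * N) ≤ (1 + |ν|) * (1 + |ξ₁ + ξ₂|) := by
    nlinarith [mul_le_mul_of_nonneg_right hc hN0, mul_nonneg hN0 (abs_nonneg (|ν| - 1))]
  have hhi : |ξ₁| ≤ (1 + |ν|) * |ξ₁| := le_mul_of_one_le_left (abs_nonneg _) (by linarith)
  have h := jb_bounds_of_abs_bounds (C := 3) (by linarith)
    (le_of_mul_le_mul_left hlo (by positivity)) ((abs_add_le ξ₁ ξ₂).trans (by linarith))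
  norm_num at h
  exact h

lemma abs_phase_lt {t : ℝ} (ht : t ≠ 0) (hN : 1 + |ν| < N)
    (h₁ : |(1 + |ν|) * ξ₁ + sgn ν * N| < (1 + |ν|) / (4 * jb t * N))
    (h₂ : |2 * ξ₂ - sgn ν * N| < 1 / (4 * jb t * N)) :
    |(ξ₁ + ξ₂) ^ 2 - ν * |ξ₁| * ξ₁ - ξ₂ ^ 2| < 1 / |t| := by
  have hν := abs_nonneg ν
  have hN1 : 1 ≤ N := by linarith
  have hjb := one_le_jb t
  have h₁' := h₁.trans_le (div_four_mul_jb_mul_le t (by positivity) hN1)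
  have hξ₁ : |ξ₁| ≤ 5 * N / (4 * (1 + |ν|)) := by
    rw [le_div_iff₀ (by positivity)]
    linarith [abs_lt.mp (abs_mul_abs_sub_lt (by linarith) h₁')]
  have hη : |(1 + |ν|) * ξ₁ + 2 * ξ₂| ≤ (2 + |ν|) / (4 * jb t * N) := by
    calc |(1 + |ν|) * ξ₁ + 2 * ξ₂|
        = |((1 + |ν|) * ξ₁ + sgn ν * N) + (2 * ξ₂ - sgn ν * N)| := by ring_nf
      _ ≤ _ := abs_add_le _ _
      _ ≤ _ := by rw [show 2 + |ν| = (1 + |ν|) + 1 by ring, add_div]; linarith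
  rw [phase_eq_of_sgn_eq_neg (sgn_fst_eq_neg_sgn hN h₁'), abs_mul]
  calc |ξ₁| * |(1 + |ν|) * ξ₁ + 2 * ξ₂|
      ≤ 5 * N / (4 * (1 + |ν|)) * ((2 + |ν|) / (4 * jb t * N)) :=
        mul_le_mul hξ₁ hη (abs_nonneg _) (by positivity)
    _ ≤ 1 / jb t := by
      rw [div_mul_div_comm, div_le_div_iff₀ (by positivity) (by positivity)]
      nlinarith [mul_pos (by linarith : (0 : ℝ) < jb t) (by linarith : (0 : ℝ) < N)]
    _ < 1 / |t| := one_div_lt_one_div_of_lt (abs_pos.mpr ht) (abs_lt_jb t)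

end Localization

/-- Frequency localization properties in the ill-posedness proof for `s' < -1/2`:
for `ξ₁ ∈ A_N`, `ξ₂ ∈ B_N` one has `sgn ξ₁ = -sgn ν`,
`⟨ξ₁⟩ ~ ⟨ξ₂⟩ ~ ⟨ξ₁+ξ₂⟩ ~ N` (with constants depending only on `ν`), and
`|(ξ₁+ξ₂)² - ν|ξ₁|ξ₁ - ξ₂²| < 1/|t|`. -/
theorem stmt_14 (ν : ℝ) (hν : |ν| ≠ 1) :
    ∃ c₁ c₂ : ℝ, 0 < c₁ ∧ c₁ ≤ c₂ ∧
      ∀ t : ℝ, t ≠ 0 → ∀ N : ℕ, (N : ℝ) > 1 + |ν| →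
        ∀ ξ₁ ξ₂ : ℝ,
          |(1 + |ν|) * ξ₁ + sgn ν * N| < (1 + |ν|) / (4 * jb t * N) →
          |2 * ξ₂ - sgn ν * N| < 1 / (4 * jb t * N) →
          sgn ξ₁ = -sgn ν ∧
          (c₁ * N ≤ jb ξ₁ ∧ jb ξ₁ ≤ c₂ * N) ∧
          (c₁ * N ≤ jb ξ₂ ∧ jb ξ₂ ≤ c₂ * N) ∧
          (c₁ * N ≤ jb (ξ₁ + ξ₂) ∧ jb (ξ₁ + ξ₂) ≤ c₂ * N) ∧
          |(ξ₁ + ξ₂) ^ 2 - ν * |ξ₁| * ξ₁ - ξ₂ ^ 2| < 1 / |t| := by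
  refine ⟨lowerConst ν, 4, lowerConst_pos hν, (lowerConst_le_one_eighth ν).trans (by norm_num), ?_⟩
  intro t ht N hN ξ₁ ξ₂ h₁ h₂
  have hN1 : (1 : ℝ) ≤ N := by linarith [abs_nonneg ν]
  have h₁' := h₁.trans_le (div_four_mul_jb_mul_le t (by positivity) hN1)
  have h₂' := h₂.trans_le (div_four_mul_jb_mul_le t zero_le_one hN1)
  exact ⟨sgn_fst_eq_neg_sgn hN h₁', jb_fst_bounds hN h₁', jb_snd_bounds hN h₂',
    jb_add_bounds hN h₁' h₂', abs_phase_lt ht hN h₁ h₂⟩
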